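/- Let K be a field and, for all n, k ∈ ℕ, let F n k be a K-vector space, with linear maps P n k : F n (k+1) → F n k (horizontal) and d n k : F (n+1) k → F n k (vertical) satisfying: (i) commutativity, P n k ∘ d n (k+1) = d n k ∘ P (n+1) k for all n, k; (ii) exactness of every row, i.e. every P n 0 is surjective and range(P n (k+1)) = ker(P n k) for all n, k; (iii) exactness of every column of index k ≥ 1, i.e. d 0 k is surjective and ker(d n k) = range(d (n+1) k) for all n and all k ≥ 1; (iv) the column of index 0 is a complex, i.e. d n 0 ∘ d (n+1) 0 = 0 for all n. Then the column of index 0 is exact: d 0 0 is surjective and ker(d n 0) = range(d (n+1) 0) for all n ∈ ℕ. -/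

import Mathlib

/-!
Staircase chase. An element `x` of `ker (d n 0)` lifts along the surjection `P (n+1) 0` to some
`y`, and it suffices to write `P y` as `d (P v)`. Moving one step up and to the right, the
commutativity and row exactness turn `d y` into `P y'` with `y'` again satisfying the hypothesis
one row lower, so by induction on the row `P y' = d (P w)`. Then `y - P w` is a `d`-cycle in a
column of positive index, hence a `d`-boundary `d u`, and `P y = P (d u) = d (P u)` since
`P ∘ P = 0`. The chase ends in row `0`, where the columns of positive index are surjective.
-/

namespace DiagramChase

variable {K : Type*} [Field K] {F : ℕ → ℕ → Type*}
    [∀ n k, AddCommGroup (F n k)] [∀ n k, Module K (F n k)]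
    {P : ∀ n k, F n (k + 1) →ₗ[K] F n k} {d : ∀ n k, F (n + 1) k →ₗ[K] F n k}

theorem exists_P_eq_d_of_d_P_eq_zero
    (hcomm : ∀ n k, ∀ x : F (n + 1) (k + 1), P n k (d n (k + 1) x) = d n k (P (n + 1) k x))
    (hrow_exact : ∀ n k, LinearMap.range (P n (k + 1)) = LinearMap.ker (P n k))
    {n k : ℕ} {y : F (n + 1) (k + 1)} (hy : d n k (P (n + 1) k y) = 0) :
    ∃ y' : F n (k + 2), P n (k + 1) y' = d n (k + 1) y := by
  have hker : d n (k + 1) y ∈ LinearMap.ker (P n k) := by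
    rw [LinearMap.mem_ker, hcomm, hy]
  rwa [← hrow_exact] at hker

theorem exists_d_P_eq_P_of_d_P_eq_d
    (hcomm : ∀ n k, ∀ x : F (n + 1) (k + 1), P n k (d n (k + 1) x) = d n k (P (n + 1) k x))
    (hrow_exact : ∀ n k, LinearMap.range (P n (k + 1)) = LinearMap.ker (P n k))
    (hcol_exact : ∀ n, ∀ k, 1 ≤ k → LinearMap.ker (d n k) = LinearMap.range (d (n + 1) k))
    {n k : ℕ} {y : F (n + 1) (k + 1)} {w : F (n + 1) (k + 2)}
    (hw : d n (k + 1) (P (n + 1) (k + 1) w) = d n (k + 1) y) :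
    ∃ u : F (n + 2) (k + 1), d (n + 1) k (P (n + 2) k u) = P (n + 1) k y := by
  have hcycle : y - P (n + 1) (k + 1) w ∈ LinearMap.ker (d n (k + 1)) := by
    rw [LinearMap.mem_ker, map_sub, hw, sub_self]
  obtain ⟨u, hu⟩ : y - P (n + 1) (k + 1) w ∈ LinearMap.range (d (n + 1) (k + 1)) := by
    rwa [← hcol_exact n (k + 1) (Nat.le_add_left 1 k)]
  have hPP : P (n + 1) k (P (n + 1) (k + 1) w) = 0 := by
    rw [← LinearMap.mem_ker, ← hrow_exact]
    exact LinearMap.mem_range_self _ w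
  refine ⟨u, ?_⟩
  rw [← hcomm, hu, map_sub, hPP, sub_zero]

theorem exists_d_P_eq_P_of_d_P_eq_zero
    (hcomm : ∀ n k, ∀ x : F (n + 1) (k + 1), P n k (d n (k + 1) x) = d n k (P (n + 1) k x))
    (hrow_exact : ∀ n k, LinearMap.range (P n (k + 1)) = LinearMap.ker (P n k))
    (hcol_surj : ∀ k, 1 ≤ k → Function.Surjective (d 0 k))
    (hcol_exact : ∀ n, ∀ k, 1 ≤ k → LinearMap.ker (d n k) = LinearMap.range (d (n + 1) k))
    (n k : ℕ) (y : F (n + 1) (k + 1)) (hy : d n k (P (n + 1) k y) = 0) :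
    ∃ v : F (n + 2) (k + 1), d (n + 1) k (P (n + 2) k v) = P (n + 1) k y := by
  induction n generalizing k with
  | zero =>
    obtain ⟨y', hy'⟩ := exists_P_eq_d_of_d_P_eq_zero hcomm hrow_exact hy
    obtain ⟨w, rfl⟩ := hcol_surj (k + 2) (Nat.le_add_left 1 (k + 1)) y'
    exact exists_d_P_eq_P_of_d_P_eq_d hcomm hrow_exact hcol_exact (by rw [← hcomm, hy'])
  | succ n ih =>
    obtain ⟨y', hy'⟩ := exists_P_eq_d_of_d_P_eq_zero hcomm hrow_exact hy
    have hy'_cycle : d n (k + 1) (P (n + 1) (k + 1) y') = 0 := by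
      rw [hy', ← LinearMap.mem_ker, hcol_exact n (k + 1) (Nat.le_add_left 1 k)]
      exact LinearMap.mem_range_self _ y
    obtain ⟨w, hw⟩ := ih (k + 1) y' hy'_cycle
    exact exists_d_P_eq_P_of_d_P_eq_d hcomm hrow_exact hcol_exact (hw.trans hy')

end DiagramChase

theorem stmt11 {K : Type*} [Field K] (F : ℕ → ℕ → Type*)
    [∀ n k, AddCommGroup (F n k)] [∀ n k, Module K (F n k)]
    (P : ∀ n k, F n (k + 1) →ₗ[K] F n k)
    (d : ∀ n k, F (n + 1) k →ₗ[K] F n k)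
    (hcomm : ∀ n k, ∀ x : F (n + 1) (k + 1), P n k (d n (k + 1) x) = d n k (P (n + 1) k x))
    (hrow_surj : ∀ n, Function.Surjective (P n 0))
    (hrow_exact : ∀ n k, LinearMap.range (P n (k + 1)) = LinearMap.ker (P n k))
    (hcol_surj : ∀ k, 1 ≤ k → Function.Surjective (d 0 k))
    (hcol_exact : ∀ n, ∀ k, 1 ≤ k → LinearMap.ker (d n k) = LinearMap.range (d (n + 1) k))
    (hcomplex : ∀ n, ∀ x : F (n + 2) 0, d n 0 (d (n + 1) 0 x) = 0) :
    Function.Surjective (d 0 0) ∧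
      ∀ n, LinearMap.ker (d n 0) = LinearMap.range (d (n + 1) 0) := by
  refine ⟨fun x ↦ ?_, fun n ↦ le_antisymm (fun x hx ↦ ?_) ?_⟩
  · obtain ⟨y, rfl⟩ := hrow_surj 0 x
    obtain ⟨v, rfl⟩ := hcol_surj 1 le_rfl y
    exact ⟨P 1 0 v, (hcomm 0 0 v).symm⟩
  · obtain ⟨y, rfl⟩ := hrow_surj (n + 1) x
    obtain ⟨v, hv⟩ :=
      DiagramChase.exists_d_P_eq_P_of_d_P_eq_zero hcomm hrow_exact hcol_surj hcol_exact n 0 y hx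
    exact ⟨P (n + 2) 0 v, hv⟩
  · rintro x ⟨z, rfl⟩
    exact hcomplex n z
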